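/- arXiv:1605.02017 — 8 statements merged into one kernel-verified Lean document; each statement's English description precedes it below -/
import Mathlib

section
/- In the group G, the commutator (derived) subgroup [G,G] equals the cyclic subgroup generated by α⁴; in particular [G,G] is cyclic of order 10. -/
/-!
Conjugation by `β` acts on `⟨α⟩` as `x ↦ x ^ 13`, so `⁅β, α⁆ = α ^ 12`, whose powers are
exactly those of `α ^ 4` because `α ^ 40 = 1`. Since `⟨α ^ 4⟩` is normal and the images of the
generators commute modulo it, `[G, G] = ⟨α ^ 4⟩`. Its order is `10` because `α` has order
exactly `40`: `G / ⟨α⟩` is generated by the image of `β`, so `160 ∣ 4 · orderOf α`.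
-/

open Subgroup

open scoped commutatorElement

section

variable {G : Type*} [Group G]

theorem closure_image_eq_top_of_surjective {H : Type*} [Group H] {f : G →* H}
    (hf : Function.Surjective f) {s : Set G} (hs : closure s = ⊤) : closure (f '' s) = ⊤ := by
  rw [← MonoidHom.map_closure, hs, map_top_of_surjective f hf]

theorem isMulCommutative_of_closure_eq_top {s : Set G} (hs : closure s = ⊤)
    (hcomm : ∀ x ∈ s, ∀ y ∈ s, x * y = y * x) : IsMulCommutative G := by
  have : IsMulCommutative (closure s) := isMulCommutative_closure hcomm
  refine ⟨⟨fun x y => ?_⟩⟩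
  have hx : x ∈ closure s := hs ▸ mem_top x
  have hy : y ∈ closure s := hs ▸ mem_top y
  exact congrArg Subtype.val (IsMulCommutative.is_comm.comm (⟨x, hx⟩ : closure s) ⟨y, hy⟩)

theorem commutator_le_of_closure_pair_eq_top {a b : G} (hgen : closure {a, b} = ⊤)
    {N : Subgroup G} [N.Normal] (hab : ⁅a, b⁆ ∈ N) : commutator G ≤ N := by
  let π := QuotientGroup.mk' N
  have hgen' : closure {π a, π b} = ⊤ := by
    rw [← Set.image_pair]
    exact closure_image_eq_top_of_surjective (QuotientGroup.mk'_surjective N) hgen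
  have hcomm : Commute (π a) (π b) := by
    rw [← commutatorElement_eq_one_iff_commute, ← map_commutatorElement]
    exact (QuotientGroup.eq_one_iff _).2 hab
  refine Normal.quotient_commutative_iff_commutator_le.1
    (isMulCommutative_of_closure_eq_top hgen' ?_)
  rintro x (rfl | rfl) y (rfl | rfl)
  exacts [rfl, hcomm.eq, hcomm.eq.symm, rfl]

theorem zpowers_normal_of_conj_mem [Finite G] {s : Set G} (hs : closure s = ⊤) {x : G}
    (hx : ∀ g ∈ s, g * x * g⁻¹ ∈ zpowers x) : (zpowers x).Normal := by
  rw [← normalizer_eq_top_iff, eq_top_iff, ← hs, closure_le]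
  intro g hg
  refine mem_normalizer_fintype fun y hy => ?_
  obtain ⟨k, rfl⟩ := mem_zpowers_iff.1 hy
  rw [← conj_zpow]
  exact zpow_mem (hx g hg) k

theorem zpowers_pow_normal_of_conj_eq_pow [Finite G] {a b : G} (hgen : closure {a, b} = ⊤)
    {k : ℕ} (hrel : b * a * b⁻¹ = a ^ k) (n : ℕ) : (zpowers (a ^ n)).Normal := by
  refine zpowers_normal_of_conj_mem hgen ?_
  rintro g (rfl | rfl)
  · rw [(Commute.self_pow g n).eq, mul_inv_cancel_right]
    exact mem_zpowers _
  · rw [← conj_pow, hrel, ← pow_mul, mul_comm, pow_mul]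
    exact pow_mem (mem_zpowers _) k

theorem card_dvd_orderOf_mul_orderOf {a b : G} (hgen : closure {a, b} = ⊤)
    [(zpowers a).Normal] : Nat.card G ∣ orderOf b * orderOf a := by
  let π := QuotientGroup.mk' (zpowers a)
  have hπa : π a = 1 := (QuotientGroup.eq_one_iff a).2 (mem_zpowers a)
  have hquot : zpowers (π b) = ⊤ := by
    have := closure_image_eq_top_of_surjective (QuotientGroup.mk'_surjective (zpowers a)) hgen
    rwa [Set.image_pair, hπa, closure_insert_one, ← zpowers_eq_closure] at this
  rw [card_eq_card_quotient_mul_card_subgroup (zpowers a), Nat.card_zpowers,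
    ← card_top (G := G ⧸ zpowers a), ← hquot, Nat.card_zpowers]
  exact mul_dvd_mul_right (orderOf_map_dvd π b) _

end

/-- In the group `G = ⟨α, β ∣ α⁴⁰ = β⁴ = 1, βαβ⁻¹ = α¹³⟩` of order 160,
the commutator (derived) subgroup `[G,G]` equals the cyclic subgroup generated by `α⁴`;
in particular `[G,G]` is cyclic of order 10. -/
theorem commutator_eq_zpowers_alpha_pow_four
    (G : Type*) [Group G] (α β : G)
    (hgen : Subgroup.closure {α, β} = ⊤)
    (hα : α ^ 40 = 1) (hβ : β ^ 4 = 1)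
    (hrel : β * α * β⁻¹ = α ^ 13)
    (hcard : Nat.card G = 160) :
    commutator G = Subgroup.zpowers (α ^ 4) ∧
      IsCyclic (commutator G) ∧ Nat.card (commutator G) = 10 := by
  have : Finite G := Nat.finite_of_card_ne_zero (by rw [hcard]; norm_num)
  have hβα : ⁅β, α⁆ = α ^ 12 := by rw [commutatorElement_def, hrel]; group
  have : (zpowers α).Normal := by simpa using zpowers_pow_normal_of_conj_eq_pow hgen hrel 1
  have : (zpowers (α ^ 4)).Normal := zpowers_pow_normal_of_conj_eq_pow hgen hrel 4
  have hle : commutator G ≤ zpowers (α ^ 4) :=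
    commutator_le_of_closure_pair_eq_top (Set.pair_comm α β ▸ hgen) <| by
      rw [hβα, show 12 = 4 * 3 from rfl, pow_mul]
      exact pow_mem (mem_zpowers _) 3
  have hge : zpowers (α ^ 4) ≤ commutator G := by
    have hα4 : α ^ 4 = (α ^ 12) ^ 7 := by
      rw [← pow_mul, show 12 * 7 = 40 * 2 + 4 from rfl, pow_add, pow_mul, hα, one_pow, one_mul]
    rw [zpowers_le, hα4, ← hβα]
    exact pow_mem (commutator_mem_commutator (mem_top β) (mem_top α)) 7
  have hord : orderOf α = 40 := by
    have h160 := card_dvd_orderOf_mul_orderOf hgen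
    rw [hcard] at h160
    exact Nat.dvd_antisymm (orderOf_dvd_of_pow_eq_one hα) <| Nat.dvd_of_mul_dvd_mul_left
      (by norm_num : 0 < 4) (h160.trans (mul_dvd_mul_right (orderOf_dvd_of_pow_eq_one hβ) _))
  have heq : commutator G = zpowers (α ^ 4) := le_antisymm hle hge
  refine ⟨heq, heq ▸ inferInstance, ?_⟩
  rw [heq, Nat.card_zpowers, orderOf_pow, hord]
  rfl
end

section
/- Every subgroup of G of index 10 (equivalently, of order 16) contains the element α¹⁰, and hence contains the center z(G) = ⟨α¹⁰⟩. -/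
open Pointwise

/-- In the group `G = ⟨α, β ∣ α⁴⁰ = β⁴ = 1, βαβ⁻¹ = α¹³⟩` of order 160,
every subgroup of index 10 (equivalently, of order 16) contains `α¹⁰`, and hence contains
the center `z(G) = ⟨α¹⁰⟩`. -/
theorem subgroup_index_ten_contains_center
    (G : Type*) [Group G] (α β : G)
    (hgen : Subgroup.closure {α, β} = ⊤)
    (hα : α ^ 40 = 1) (hβ : β ^ 4 = 1)
    (hrel : β * α * β⁻¹ = α ^ 13)
    (hcard : Nat.card G = 160) :
    ∀ H : Subgroup G, H.index = 10 →
      α ^ 10 ∈ H ∧ Subgroup.zpowers (α ^ 10) ≤ H ∧ Subgroup.center G ≤ H := by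
  -- basic integer-power facts
  have hαz : α ^ (40 : ℤ) = 1 := by
    rw [show (40:ℤ) = ((40:ℕ):ℤ) by norm_num, zpow_natCast]; exact hα
  have hβz : β ^ (4 : ℤ) = 1 := by
    rw [show (4:ℤ) = ((4:ℕ):ℤ) by norm_num, zpow_natCast]; exact hβ
  have hrelz : β * α * β⁻¹ = α ^ (13 : ℤ) := by
    rw [show (13:ℤ) = ((13:ℕ):ℤ) by norm_num, zpow_natCast]; exact hrel
  have hper : ∀ m k : ℤ, α ^ (m + 40 * k) = α ^ m := by
    intro m k
    rw [zpow_add, zpow_mul, hαz, one_zpow, mul_one]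
  have hβper : ∀ m k : ℤ, β ^ (m + 4 * k) = β ^ m := by
    intro m k
    rw [zpow_add, zpow_mul, hβz, one_zpow, mul_one]
  have hconj : ∀ n : ℤ, β * α ^ n * β⁻¹ = α ^ (13 * n) := by
    intro n
    rw [← conj_zpow, hrelz, ← zpow_mul]
  set N := Subgroup.zpowers α with hNdef
  -- inverse conjugation
  have hconjinv : ∀ n : ℤ, β⁻¹ * α ^ n * β = α ^ (37 * n) := by
    intro n
    have h1 : β * α ^ (37 * n) * β⁻¹ = α ^ n := by
      rw [hconj, show 13 * (37 * n) = n + 40 * (12 * n) by ring, hper]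
    rw [← h1]; group
  -- N is a normal subgroup
  have hNnormal : N.Normal := by
    rw [← Subgroup.normalizer_eq_top_iff, eq_top_iff, ← hgen, Subgroup.closure_le]
    rintro x hx
    rcases hx with h | h <;> rw [h]
    · exact Subgroup.le_normalizer (Subgroup.mem_zpowers α)
    · rw [SetLike.mem_coe, Subgroup.mem_normalizer_iff]
      intro h
      constructor
      · rintro ⟨n, rfl⟩
        exact ⟨13 * n, (hconj n).symm⟩
      · rintro ⟨n, hn⟩
        have hn' : α ^ n = β * h * β⁻¹ := hn
        have : h = β⁻¹ * α ^ n * β := by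
          rw [hn']; group
        rw [this, hconjinv]
        exact ⟨37 * n, rfl⟩
  -- the quotient is generated by the image of β, and α has order 40
  have hQgen : Subgroup.zpowers ((QuotientGroup.mk' N) β) = ⊤ := by
    have hsurj : Function.Surjective (QuotientGroup.mk' N) := QuotientGroup.mk'_surjective N
    have h1 : Subgroup.map (QuotientGroup.mk' N) ⊤ = ⊤ :=
      Subgroup.map_top_of_surjective _ hsurj
    rw [← hgen, MonoidHom.map_closure] at h1
    have himg : (QuotientGroup.mk' N) '' {α, β} = {1, (QuotientGroup.mk' N) β} := by
      rw [Set.image_pair]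
      congr 1
      rw [QuotientGroup.mk'_apply, QuotientGroup.eq_one_iff]
      exact Subgroup.mem_zpowers α
    rw [himg] at h1
    rw [← h1, Subgroup.zpowers_eq_closure]
    rw [show ({1, (QuotientGroup.mk' N) β} : Set (G ⧸ N)) = {1} ∪ {(QuotientGroup.mk' N) β} by rfl,
      Subgroup.closure_union, Subgroup.closure_singleton_one, bot_sup_eq]
  have hQcard : Nat.card (G ⧸ N) = orderOf ((QuotientGroup.mk' N) β) := by
    rw [← orderOf_eq_card_of_forall_mem_zpowers]
    intro x
    rw [hQgen]; trivial
  have hβQ : orderOf ((QuotientGroup.mk' N) β) ∣ 4 := by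
    apply orderOf_dvd_of_pow_eq_one
    rw [← map_pow, hβ, map_one]
  have hNidxcard : N.index = Nat.card (G ⧸ N) := rfl
  have hmul : Nat.card N * N.index = 160 := by rw [Subgroup.card_mul_index, hcard]
  have hcardNord : Nat.card N = orderOf α := Nat.card_zpowers α
  have hα40 : orderOf α ∣ 40 := orderOf_dvd_of_pow_eq_one hα
  have hordidx : orderOf α = 40 ∧ N.index = 4 := by
    have h1 : orderOf α ≤ 40 := Nat.le_of_dvd (by norm_num) hα40
    have h2 : N.index ≤ 4 := by
      rw [hNidxcard, hQcard]; exact Nat.le_of_dvd (by norm_num) hβQ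
    rw [hcardNord] at hmul
    constructor <;> nlinarith [hmul, h1, h2]
  obtain ⟨hord, hNindex⟩ := hordidx
  have hdvd : ∀ m : ℤ, α ^ m = 1 ↔ (40:ℤ) ∣ m := by
    intro m
    rw [← orderOf_dvd_iff_zpow_eq_one, hord]
    norm_cast
  -- the center is contained in ⟨α¹⁰⟩
  have hcenter : Subgroup.center G ≤ Subgroup.zpowers (α ^ 10) := by
    have hdecomp : ∀ g : G, ∃ i j : ℤ, g = α ^ i * β ^ j := by
      have hsup : N ⊔ Subgroup.zpowers β = ⊤ := by
        rw [hNdef, Subgroup.zpowers_eq_closure, Subgroup.zpowers_eq_closure,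
          ← Subgroup.closure_union, ← hgen]
        congr 1
      intro g
      have hg : g ∈ (N : Set G) * (Subgroup.zpowers β : Set G) := by
        rw [← Subgroup.normal_mul, hsup]
        trivial
      obtain ⟨a, ha, b, hb, hab⟩ := hg
      obtain ⟨i, hi⟩ := ha
      obtain ⟨j, hj⟩ := hb
      exact ⟨i, j, by rw [← hab, ← hi, ← hj]⟩
    intro g hg
    obtain ⟨i, j, rfl⟩ := hdecomp g
    rw [Subgroup.mem_center_iff] at hg
    -- reduce exponent of β mod 4
    have hβj : β ^ j = β ^ (j % 4) := by
      conv_lhs => rw [show j = j % 4 + 4 * (j / 4) from by omega]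
      exact hβper _ _
    have hconjn : ∀ r : ℕ, β ^ r * α * (β ^ r)⁻¹ = α ^ ((13:ℤ) ^ r) := by
      intro r
      induction r with
      | zero => simp
      | succ n ih =>
        have h1 : β ^ (n+1) * α * (β ^ (n+1))⁻¹ = β * (β ^ n * α * (β ^ n)⁻¹) * β⁻¹ := by
          rw [pow_succ']
          group
        rw [h1, ih, hconj, pow_succ, mul_comm]
    have hβj' : β ^ j = β ^ (j % 4).toNat := by
      rw [hβj, ← zpow_natCast, Int.toNat_of_nonneg (by omega)]
    -- commutation with α
    have hcomm : α * β ^ (j % 4).toNat = β ^ (j % 4).toNat * α := by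
      have h1 := hg α
      rw [← mul_assoc, ← zpow_one_add, show 1 + i = i + 1 by ring, zpow_add, zpow_one,
        mul_assoc, mul_assoc] at h1
      have h2 := mul_left_cancel h1
      rw [hβj'] at h2
      exact h2
    have haeq : α ^ ((13:ℤ) ^ (j % 4).toNat) = α := by
      rw [← hconjn, ← hcomm]
      group
    have hforce : ∀ c : ℤ, α ^ c = α → (40:ℤ) ∣ c - 1 := by
      intro c hc
      rw [← hdvd, zpow_sub, hc, zpow_one, mul_inv_cancel]
    have hr : j % 4 = 0 := by
      by_contra hne
      have hr0 : 0 ≤ j % 4 := by omega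
      have hr4 : j % 4 < 4 := by omega
      have hcases : (j % 4).toNat = 1 ∨ (j % 4).toNat = 2 ∨ (j % 4).toNat = 3 := by omega
      rcases hcases with h | h | h <;> rw [h] at haeq <;>
        · have := hforce _ haeq
          norm_num at this
    have hj1 : β ^ j = 1 := by rw [hβj, hr, zpow_zero]
    rw [hj1, mul_one]
    -- now g = α ^ i; commutation with β forces 10 ∣ i
    have h1 := hg β
    rw [hj1, mul_one] at h1
    have h2 : β * α ^ i * β⁻¹ = α ^ i := by
      rw [h1]; group
    rw [hconj] at h2
    have h3 : (40:ℤ) ∣ 13 * i - i := by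
      rw [← hdvd, zpow_sub, h2, mul_inv_cancel]
    have h10 : (10:ℤ) ∣ i := by omega
    obtain ⟨k, rfl⟩ := h10
    have hk : (α ^ (10:ℕ)) ^ k = α ^ ((10:ℤ) * k) := by
      rw [← zpow_natCast α 10, ← zpow_mul]; norm_num
    exact ⟨k, hk⟩
  -- the main statement
  intro H hH
  have hmem : α ^ 10 ∈ H := by
    set K := H ⊓ N with hKdef
    have hcardN : Nat.card N = 40 := by rw [hNdef, Nat.card_zpowers, hord]
    have hcardH : Nat.card H = 16 := by
      have := Subgroup.card_mul_index H
      rw [hH, hcard] at this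
      omega
    have hKidx : K.index ≤ 40 := by
      calc K.index ≤ H.index * N.index := Subgroup.index_inf_le
      _ = 40 := by rw [hH, hNindex]
    have hKmul : Nat.card K * K.index = 160 := by rw [Subgroup.card_mul_index, hcard]
    have hK4 : 4 ≤ Nat.card K := by
      by_contra hlt
      push_neg at hlt
      have : Nat.card K * K.index ≤ 3 * 40 := Nat.mul_le_mul (by omega) hKidx
      omega
    have hKH : Nat.card K ∣ 16 := hcardH ▸ Subgroup.card_dvd_of_le inf_le_left
    have hKN : Nat.card K ∣ 40 := hcardN ▸ Subgroup.card_dvd_of_le inf_le_right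
    have hK8 : Nat.card K ∣ 8 := by
      have := Nat.dvd_gcd hKH hKN
      norm_num at this
      exact this
    have hK48 : Nat.card K = 4 ∨ Nat.card K = 8 := by
      have hle : Nat.card K ≤ 8 := Nat.le_of_dvd (by norm_num) hK8
      interval_cases h : Nat.card K <;> omega
    -- K is cyclic
    haveI : IsCyclic N := by
      refine ⟨⟨⟨α, Subgroup.mem_zpowers α⟩, ?_⟩⟩
      rintro ⟨x, m, rfl⟩
      exact ⟨m, by ext; simp⟩
    haveI : Finite K := Nat.finite_of_card_ne_zero (by omega)
    haveI : IsCyclic K := Subgroup.isCyclic_of_le (inf_le_right : K ≤ N)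
    obtain ⟨x, hx⟩ := IsCyclic.exists_generator (α := K)
    have hxcard : orderOf x = Nat.card K := orderOf_eq_card_of_forall_mem_zpowers hx
    -- produce an element of order 4 in K
    obtain ⟨y, hyK, hy4⟩ : ∃ y : G, y ∈ K ∧ orderOf y = 4 := by
      rcases hK48 with h | h
      · exact ⟨(x : G), x.2, by rw [Subgroup.orderOf_coe, hxcard, h]⟩
      · refine ⟨((x ^ 2 : K) : G), (x ^ 2 : K).2, ?_⟩
        rw [Subgroup.orderOf_coe, orderOf_pow, hxcard, h]
        norm_num
    -- y is a power of α
    obtain ⟨m, hm⟩ : ∃ m : ℤ, α ^ m = y := (inf_le_right : K ≤ N) hyK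
    have hy4' : y ^ (4:ℕ) = 1 := by rw [← hy4]; exact pow_orderOf_eq_one y
    have h40 : (40:ℤ) ∣ 4 * m := by
      rw [← hdvd, show (4:ℤ) * m = m * 4 by ring, zpow_mul, hm]
      rw [show (4:ℤ) = ((4:ℕ):ℤ) by norm_num, zpow_natCast]
      exact hy4'
    have h10 : (10:ℤ) ∣ m := by omega
    obtain ⟨k, hk⟩ := h10
    -- k is odd
    have hkodd : k % 2 = 1 := by
      rcases Int.emod_two_eq k with h | h
      · exfalso
        have hy2 : y ^ (2:ℕ) ≠ 1 := by
          intro hcon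
          have := orderOf_dvd_of_pow_eq_one hcon
          rw [hy4] at this
          omega
        apply hy2
        rw [← hm, ← zpow_natCast, ← zpow_mul, hdvd]
        push_cast
        omega
      · exact h
    -- α ^ 10 = y ^ k ∈ H
    have hfinal : α ^ (10:ℕ) = y ^ k := by
      rw [← hm, ← zpow_mul, ← zpow_natCast α 10]
      obtain ⟨t, ht⟩ : ∃ t, k = 2*t+1 := ⟨k/2, by omega⟩
      have hmk : m * k = 10 + 40 * (t * t + t) := by
        rw [hk, ht]; ring
      rw [hmk, hper]
      norm_num
    rw [hfinal]
    exact H.zpow_mem ((inf_le_left : K ≤ H) hyK) k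
  exact ⟨hmem, Subgroup.zpowers_le.mpr hmem,
    hcenter.trans (Subgroup.zpowers_le.mpr hmem)⟩
end

section
/- The subgroup generated by α²⁰ is the unique normal subgroup of order 2 in G; that is, every normal subgroup of G of order 2 equals ⟨α²⁰⟩. -/
/-- In the group `G = ⟨α, β ∣ α⁴⁰ = β⁴ = 1, βαβ⁻¹ = α¹³⟩` of order 160,
the subgroup generated by `α²⁰` is the unique normal subgroup of order 2: every normal
subgroup of `G` of order 2 equals `⟨α²⁰⟩`. -/
theorem unique_normal_subgroup_order_two
    (G : Type*) [Group G] (α β : G)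
    (hgen : Subgroup.closure {α, β} = ⊤)
    (hα : α ^ 40 = 1) (hβ : β ^ 4 = 1)
    (hrel : β * α * β⁻¹ = α ^ 13)
    (hcard : Nat.card G = 160) :
    ∀ N : Subgroup G, N.Normal → Nat.card N = 2 → N = Subgroup.zpowers (α ^ 20) := by
  intro N hN hNcard
  have hfin : Finite G := Nat.finite_of_card_ne_zero (by omega)
  -- exponent reduction lemmas
  have hαmod : ∀ m n : ℕ, m % 40 = n % 40 → α ^ m = α ^ n := by
    intro m n h
    rw [← Nat.div_add_mod m 40, ← Nat.div_add_mod n 40, pow_add, pow_add,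
      pow_mul, pow_mul, hα, one_pow, one_pow, h]
  have hβmod : ∀ m n : ℕ, m % 4 = n % 4 → β ^ m = β ^ n := by
    intro m n h
    rw [← Nat.div_add_mod m 4, ← Nat.div_add_mod n 4, pow_add, pow_add,
      pow_mul, pow_mul, hβ, one_pow, one_pow, h]
  -- swap lemma
  have hswap1 : ∀ k : ℕ, β * α ^ k = α ^ (13 * k) * β := by
    intro k
    have : (β * α * β⁻¹) ^ k = α ^ (13 * k) := by
      rw [hrel, ← pow_mul]
    rw [conj_pow] at this
    calc β * α ^ k = (β * α ^ k * β⁻¹) * β := by group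
    _ = α ^ (13 * k) * β := by rw [this]
  have hswap : ∀ j k : ℕ, β ^ j * α ^ k = α ^ (13 ^ j * k) * β ^ j := by
    intro j
    induction j with
    | zero => intro k; simp
    | succ n ih =>
      intro k
      calc β ^ (n + 1) * α ^ k = β ^ n * (β * α ^ k) := by rw [pow_succ, mul_assoc]
      _ = β ^ n * α ^ (13 * k) * β := by rw [hswap1]; rw [mul_assoc]
      _ = α ^ (13 ^ n * (13 * k)) * β ^ n * β := by rw [ih]
      _ = α ^ (13 ^ (n + 1) * k) * β ^ (n + 1) := by
          rw [mul_assoc, ← pow_succ]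
          ring_nf
  -- normal form
  have hform : ∀ g : G, ∃ i j : ℕ, g = α ^ i * β ^ j := by
    intro g
    have hg : g ∈ Subgroup.closure {α, β} := by rw [hgen]; trivial
    induction hg using Subgroup.closure_induction with
    | mem x hx =>
      simp only [Set.mem_insert_iff, Set.mem_singleton_iff] at hx
      rcases hx with rfl | rfl
      · exact ⟨1, 0, by simp⟩
      · exact ⟨0, 1, by simp⟩
    | one => exact ⟨0, 0, by simp⟩
    | mul x y hx hy ihx ihy =>
      obtain ⟨i, j, rfl⟩ := ihx
      obtain ⟨k, l, rfl⟩ := ihy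
      refine ⟨i + 13 ^ j * k, j + l, ?_⟩
      calc α ^ i * β ^ j * (α ^ k * β ^ l)
          = α ^ i * (β ^ j * α ^ k) * β ^ l := by group
      _ = α ^ i * (α ^ (13 ^ j * k) * β ^ j) * β ^ l := by rw [hswap]
      _ = α ^ (i + 13 ^ j * k) * β ^ (j + l) := by rw [pow_add, pow_add]; group
    | inv x hx ihx =>
      obtain ⟨i, j, rfl⟩ := ihx
      refine ⟨13 ^ (3 * j) * (39 * i), 3 * j, ?_⟩
      have hβinv : (β ^ j)⁻¹ = β ^ (3 * j) := by
        apply inv_eq_of_mul_eq_one_right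
        rw [← pow_add, hβmod (j + 3 * j) 0 (by omega), pow_zero]
      have hαinv : (α ^ i)⁻¹ = α ^ (39 * i) := by
        apply inv_eq_of_mul_eq_one_right
        rw [← pow_add, hαmod (i + 39 * i) 0 (by omega), pow_zero]
      rw [mul_inv_rev, hβinv, hαinv, hswap]
  -- the bijection
  set f : ZMod 40 × ZMod 4 → G := fun p => α ^ p.1.val * β ^ p.2.val with hf
  have hsurj : Function.Surjective f := by
    intro g
    obtain ⟨i, j, rfl⟩ := hform g
    refine ⟨((i : ZMod 40), (j : ZMod 4)), ?_⟩
    simp only [hf, ZMod.val_natCast]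
    rw [hαmod (i % 40) i (by omega), hβmod (j % 4) j (by omega)]
  have hbij : Function.Bijective f := by
    rw [Nat.bijective_iff_surjective_and_card]
    exact ⟨hsurj, by simp [hcard]⟩
  have hα_inj : ∀ m n : ℕ, α ^ m = α ^ n → m % 40 = n % 40 := by
    intro m n h
    have : ((m : ZMod 40), (0 : ZMod 4)) = ((n : ZMod 40), (0 : ZMod 4)) := by
      apply hbij.injective
      simp only [hf, ZMod.val_natCast]
      rw [hαmod (m % 40) m (by omega), hαmod (n % 40) n (by omega), h]
    have h2 : (m : ZMod 40) = (n : ZMod 40) := by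
      exact congrArg Prod.fst this
    rwa [ZMod.natCast_eq_natCast_iff] at h2
  -- get the nontrivial element of N
  have hNne : ∃ x ∈ N, x ≠ 1 := by
    by_contra hc
    push_neg at hc
    have : N = ⊥ := by
      rw [Subgroup.eq_bot_iff_forall]
      exact hc
    rw [this, Subgroup.card_bot] at hNcard
    omega
  obtain ⟨x, hxN, hx1⟩ := hNne
  have hx2 : x ^ 2 = 1 := by
    have : (⟨x, hxN⟩ : N) ^ Nat.card N = 1 := pow_card_eq_one'
    rw [hNcard] at this
    have := congrArg (Subgroup.subtype N) this
    simpa using this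
  have hordx : orderOf x = 2 := orderOf_eq_prime hx2 hx1
  have hNz : N = Subgroup.zpowers x := by
    refine (Subgroup.eq_of_le_of_card_ge ((Subgroup.zpowers_le).2 hxN) ?_).symm
    rw [hNcard, Nat.card_zpowers, hordx]
  -- elements of zpowers x are 1 or x
  have hmemz : ∀ y ∈ Subgroup.zpowers x, y = 1 ∨ y = x := by
    intro y hy
    obtain ⟨k, rfl⟩ := hy
    rcases Int.even_or_odd k with ⟨m, rfl⟩ | ⟨m, rfl⟩
    · left
      show x ^ (m + m) = 1
      rw [← two_mul, zpow_mul, show ((2:ℤ)) = ((2:ℕ):ℤ) from rfl, zpow_natCast, hx2, one_zpow]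
    · right
      show x ^ (2 * m + 1) = x
      rw [zpow_add, zpow_mul, show ((2:ℤ)) = ((2:ℕ):ℤ) from rfl, zpow_natCast, hx2,
        one_zpow, one_mul, zpow_one]
  -- x is central
  have hcent : ∀ g : G, g * x = x * g := by
    intro g
    have hconj : g * x * g⁻¹ ∈ N := hN.conj_mem x hxN g
    rw [hNz] at hconj
    rcases hmemz _ hconj with h | h
    · exfalso
      apply hx1
      have : g * x * g⁻¹ = g * 1 * g⁻¹ := by rw [h]; group
      exact mul_left_cancel (mul_right_cancel this)
    · calc g * x = (g * x * g⁻¹) * g := by group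
      _ = x * g := by rw [h]
  -- write x in normal form
  obtain ⟨i, j, hx⟩ := hform x
  -- reduce j mod 4
  have hx' : x = α ^ i * β ^ (j % 4) := by rw [hx, hβmod (j % 4) j (by omega)]
  -- use commutation with α to kill j
  have hj0 : j % 4 = 0 := by
    have hc := hcent α
    rw [hx'] at hc
    have h1 : α ^ (i + 1) * β ^ (j % 4) = α ^ (i + 13 ^ (j % 4)) * β ^ (j % 4) := by
      calc α ^ (i + 1) * β ^ (j % 4) = α ^ i * α * β ^ (j % 4) := by rw [pow_succ]
      _ = α * (α ^ i * β ^ (j % 4)) := by group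
      _ = α ^ i * β ^ (j % 4) * α := by rw [hc]
      _ = α ^ i * (β ^ (j % 4) * α ^ 1) := by group
      _ = α ^ i * (α ^ (13 ^ (j % 4) * 1) * β ^ (j % 4)) := by rw [hswap]
      _ = α ^ (i + 13 ^ (j % 4)) * β ^ (j % 4) := by rw [pow_add, mul_one]; group
    have h2 : α ^ (i + 1) = α ^ (i + 13 ^ (j % 4)) := mul_right_cancel h1
    have h3 := hα_inj _ _ h2
    have hj4 : j % 4 < 4 := Nat.mod_lt _ (by norm_num)
    interval_cases h : j % 4 <;> omega
  rw [hj0, pow_zero, mul_one] at hx'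
  -- use x^2 = 1
  have h2i : (2 * i) % 40 = 0 := by
    have : α ^ (2 * i) = α ^ 0 := by
      rw [pow_mul', ← hx', hx2, pow_zero]
    have := hα_inj _ _ this
    omega
  have hi : i % 40 = 0 ∨ i % 40 = 20 := by omega
  have hxval : x = α ^ (i % 40) := by rw [hx', hαmod (i % 40) i (by omega)]
  rcases hi with h | h
  · exfalso; apply hx1; rw [hxval, h, pow_zero]
  · rw [hNz, hxval, h]
end

section
/- The group G cannot be decomposed as an internal direct product of two subgroups of orders 2 and 80; that is, there are no subgroups N, H ≤ G with |N| = 2, |H| = 80, N and H normal in G, N ∩ H trivial, and NH = G. -/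
/-!
A normal subgroup `N` of order 2 is central, and a subgroup `H` of index 2 contains every
square. In `G` the element `α` has order 40 and `13` has order 4 modulo 40, so conjugation by
`β ^ m` fixes `α` only when `β ^ m = 1`; hence the centre of `G` lies in `⟨α⟩`. The involution
of `N` is therefore the involution `α ^ 20 = (α ^ 10) ^ 2` of the cyclic group `⟨α⟩` of order
40, which lies in `H`, contradicting `N ⊓ H = ⊥`.
-/

open Subgroup Pointwise

section

variable {G : Type*} [Group G]

theorem Subgroup.Normal.mem_center_of_card_eq_two {N : Subgroup G} (hN : N.Normal)
    (h2 : Nat.card N = 2) {n : G} (hn : n ∈ N) : n ∈ center G := by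
  rw [mem_center_iff]
  intro g
  by_cases h1 : n = 1
  · simp [h1]
  have hconj : (⟨g * n * g⁻¹, hN.conj_mem n hn g⟩ : N) = ⟨n, hn⟩ :=
    ((Nat.card_eq_two_iff' 1).mp h2).unique
      (by simpa [Subtype.ext_iff, mul_inv_eq_one, mul_eq_left] using h1)
      (by simpa [Subtype.ext_iff] using h1)
  exact mul_inv_eq_iff_eq_mul.mp (congrArg Subtype.val hconj)

theorem exists_sq_eq_of_sq_eq_one {α x : G} (h4 : 4 ∣ orderOf α) (hx : x ∈ zpowers α)
    (hx2 : x ^ 2 = 1) : ∃ y, y ^ 2 = x := by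
  obtain ⟨i, rfl⟩ := mem_zpowers_iff.mp hx
  have hdvd : (orderOf α : ℤ) ∣ 2 * i := by
    rw [orderOf_dvd_iff_zpow_eq_one, mul_comm, zpow_mul]
    exact_mod_cast hx2
  obtain ⟨j, rfl⟩ : (2 : ℤ) ∣ i := by
    have : (4 : ℤ) ∣ 2 * i := (Int.natCast_dvd_natCast.mpr h4).trans hdvd
    omega
  exact ⟨α ^ j, by rw [← zpow_natCast, ← zpow_mul, mul_comm]; rfl⟩

section Metacyclic

variable {α β : G} {k : ℕ}

theorem conj_pow_eq_pow_pow (hrel : β * α * β⁻¹ = α ^ k) (m : ℕ) :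
    β ^ m * α * (β ^ m)⁻¹ = α ^ k ^ m := by
  induction m with
  | zero => simp
  | succ m ih =>
    calc β ^ (m + 1) * α * (β ^ (m + 1))⁻¹ = β * (β ^ m * α * (β ^ m)⁻¹) * β⁻¹ := by group
      _ = α ^ k ^ (m + 1) := by rw [ih, ← conj_pow, hrel, ← pow_mul, pow_succ', mul_comm]

theorem zpowers_normal_of_conj_mem_s7 [Finite G] (hgen : closure {α, β} = ⊤)
    (hconj : β * α * β⁻¹ ∈ zpowers α) : (zpowers α).Normal := by
  rw [← normalizer_eq_top_iff, ← top_le_iff, ← hgen, closure_le]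
  rintro g (rfl | rfl)
  · exact le_normalizer (mem_zpowers g)
  · refine mem_normalizer_fintype fun x hx => ?_
    obtain ⟨i, rfl⟩ := mem_zpowers_iff.mp hx
    rw [SetLike.mem_coe, ← conj_zpow]
    exact zpow_mem hconj i

theorem zpowers_mul_zpowers_eq_univ (hgen : closure {α, β} = ⊤) [(zpowers α).Normal] :
    (zpowers α : Set G) * (zpowers β : Set G) = Set.univ := by
  rw [← normal_mul, zpowers_eq_closure, zpowers_eq_closure, ← Subgroup.closure_union,
    Set.singleton_union, hgen, coe_top]

theorem exists_zpowers_mul_powers [Finite G] (hgen : closure {α, β} = ⊤)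
    [(zpowers α).Normal] (g : G) : ∃ a ∈ zpowers α, ∃ m : ℕ, a * β ^ m = g := by
  obtain ⟨a, ha, b, hb, rfl⟩ : g ∈ (zpowers α : Set G) * (zpowers β : Set G) := by
    rw [zpowers_mul_zpowers_eq_univ hgen]
    trivial
  obtain ⟨m, rfl⟩ := mem_powers_iff_mem_zpowers.mpr hb
  exact ⟨a, ha, m, rfl⟩

theorem card_le_orderOf_mul_orderOf (hgen : closure {α, β} = ⊤) [(zpowers α).Normal] :
    Nat.card G ≤ orderOf α * orderOf β :=
  calc Nat.card G = Nat.card (Set.univ : Set G) := Nat.card_univ.symm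
    _ ≤ Nat.card (zpowers α : Set G) * Nat.card (zpowers β : Set G) := by
        rw [← zpowers_mul_zpowers_eq_univ hgen]
        exact Set.natCard_mul_le
    _ = orderOf α * orderOf β := by simp [Nat.card_zpowers]

theorem pow_eq_one_of_commute (hrel : β * α * β⁻¹ = α ^ k)
    (hk : orderOf β ∣ orderOf (k : ZMod (orderOf α))) {m : ℕ} (h : Commute (β ^ m) α) :
    β ^ m = 1 := by
  have hfix : α ^ k ^ m = α ^ 1 := by
    rw [← conj_pow_eq_pow_pow hrel, h.eq, mul_inv_cancel_right, pow_one]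
  have hkm : (k : ZMod (orderOf α)) ^ m = 1 := by
    exact_mod_cast (ZMod.natCast_eq_natCast_iff _ _ _).mpr (pow_eq_pow_iff_modEq.mp hfix)
  exact orderOf_dvd_iff_pow_eq_one.mp (hk.trans (orderOf_dvd_of_pow_eq_one hkm))

theorem mem_zpowers_of_mem_center [Finite G] (hgen : closure {α, β} = ⊤)
    (hrel : β * α * β⁻¹ = α ^ k) (hk : orderOf β ∣ orderOf (k : ZMod (orderOf α)))
    {g : G} (hg : g ∈ center G) : g ∈ zpowers α := by
  have := zpowers_normal_of_conj_mem_s7 hgen (hrel ▸ pow_mem (mem_zpowers α) k)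
  obtain ⟨a, ha, m, rfl⟩ := exists_zpowers_mul_powers hgen g
  have haα : Commute a α := by
    obtain ⟨i, rfl⟩ := mem_zpowers_iff.mp ha
    exact (Commute.refl α).zpow_left i
  have hβα : Commute (β ^ m) α := by
    simpa using (haα.inv_left.mul_left (mem_center_iff.mp hg α).symm)
  rwa [pow_eq_one_of_commute hrel hk hβα, mul_one]

end Metacyclic

end

theorem orderOf_thirteen_zmod_forty : orderOf (13 : ZMod 40) = 4 :=
  orderOf_eq_prime_pow (p := 2) (n := 1) (by decide) (by decide)

/-- The group `G = ⟨α, β ∣ α⁴⁰ = β⁴ = 1, βαβ⁻¹ = α¹³⟩` of order 160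
cannot be decomposed as an internal direct product of two subgroups of orders 2 and 80:
there are no normal subgroups `N, H` of `G` with `|N| = 2`, `|H| = 80`, trivial
intersection, and `NH = G`. -/
theorem no_direct_product_decomposition_two_times_eighty
    (G : Type*) [Group G] (α β : G)
    (hgen : Subgroup.closure {α, β} = ⊤)
    (hα : α ^ 40 = 1) (hβ : β ^ 4 = 1)
    (hrel : β * α * β⁻¹ = α ^ 13)
    (hcard : Nat.card G = 160) :
    ¬ ∃ N H : Subgroup G, Nat.card N = 2 ∧ Nat.card H = 80 ∧
      N.Normal ∧ H.Normal ∧ N ⊓ H = ⊥ ∧ N ⊔ H = ⊤ := by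
  rintro ⟨N, H, hN, hH, hNnormal, -, hNH, -⟩
  have : Finite G := Nat.finite_of_card_ne_zero (by omega)
  have hα40 : orderOf α = 40 := by
    have := zpowers_normal_of_conj_mem_s7 hgen (hrel ▸ pow_mem (mem_zpowers α) 13)
    have hle := hcard ▸ card_le_orderOf_mul_orderOf hgen
    have hαle := Nat.le_of_dvd (by norm_num) (orderOf_dvd_of_pow_eq_one hα)
    have hβle := Nat.le_of_dvd (by norm_num) (orderOf_dvd_of_pow_eq_one hβ)
    nlinarith
  have h13 : orderOf β ∣ orderOf ((13 : ℕ) : ZMod (orderOf α)) := by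
    rw [hα40, Nat.cast_ofNat, orderOf_thirteen_zmod_forty]
    exact orderOf_dvd_of_pow_eq_one hβ
  obtain ⟨⟨n, hnN⟩, hn1⟩ := ((Nat.card_eq_two_iff' (1 : N)).mp hN).exists
  have hn2 : n ^ 2 = 1 := by
    simpa [hN] using congrArg Subtype.val (pow_card_eq_one' (G := N) (x := ⟨n, hnN⟩))
  obtain ⟨y, rfl⟩ := exists_sq_eq_of_sq_eq_one (by rw [hα40]; norm_num)
    (mem_zpowers_of_mem_center hgen hrel h13 (hNnormal.mem_center_of_card_eq_two hN hnN)) hn2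
  have hindex : H.index = 2 := by
    have := H.card_mul_index
    rw [hH, hcard] at this
    omega
  have hy : y ^ 2 ∈ N ⊓ H := ⟨hnN, sq_mem_of_index_two hindex y⟩
  rw [hNH, mem_bot] at hy
  exact hn1 (Subtype.ext hy)
end

section
/- No subgroup G₁ of G of index 2 decomposes as an internal direct product of the order-2 subgroup ⟨α²⁰⟩ and a complementary subgroup; that is, if G₁ ≤ G has index 2 then there is no subgroup H ≤ G₁ with H normal in G₁, H ∩ ⟨α²⁰⟩ trivial, ⟨α²⁰⟩ normal in G₁, and ⟨α²⁰⟩·H = G₁. -/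
/-- In the group `G = ⟨α, β ∣ α⁴⁰ = β⁴ = 1, βαβ⁻¹ = α¹³⟩` of order 160,
no subgroup `G₁` of index 2 decomposes as an internal direct product of the order-2
subgroup `⟨α²⁰⟩` and a complementary subgroup: if `G₁ ≤ G` has index 2, then there is
no subgroup `H ≤ G₁` with `H` normal in `G₁`, `H ∩ ⟨α²⁰⟩` trivial, `⟨α²⁰⟩` normal
in `G₁`, and `⟨α²⁰⟩·H = G₁`. -/
theorem index_two_subgroup_no_central_splitting
    (G : Type*) [Group G] (α β : G)
    (hgen : Subgroup.closure {α, β} = ⊤)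
    (hα : α ^ 40 = 1) (hβ : β ^ 4 = 1)
    (hrel : β * α * β⁻¹ = α ^ 13)
    (hcard : Nat.card G = 160) :
    ∀ G₁ : Subgroup G, G₁.index = 2 →
      ¬ ∃ H : Subgroup G, H ≤ G₁ ∧
        (∀ g ∈ G₁, ∀ h ∈ H, g * h * g⁻¹ ∈ H) ∧
        H ⊓ Subgroup.zpowers (α ^ 20) = ⊥ ∧
        Subgroup.zpowers (α ^ 20) ≤ G₁ ∧
        (∀ g ∈ G₁, ∀ a ∈ Subgroup.zpowers (α ^ 20), g * a * g⁻¹ ∈ Subgroup.zpowers (α ^ 20)) ∧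
        Subgroup.zpowers (α ^ 20) ⊔ H = G₁ := by
  intro G₁ hidx
  rintro ⟨H, hHle, hHnorm, hHinf, hAle, hAnorm, hsup⟩
  -- conjugation formula
  have hconj : ∀ n : ℕ, β * α ^ n * β⁻¹ = α ^ (13 * n) := by
    intro n
    rw [pow_mul, ← hrel, conj_pow]
  have hswap : ∀ k : ℕ, β * α ^ k = α ^ (13 * k) * β := by
    intro k
    have := hconj k
    rwa [mul_inv_eq_iff_eq_mul] at this
  -- α^20 is central
  have central : ∀ g : G, Commute g (α ^ 20) := by
    intro g
    have hle : Subgroup.closure {α, β} ≤ Subgroup.centralizer {α ^ 20} := by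
      rw [Subgroup.closure_le]
      rintro x (rfl | rfl) <;> rw [SetLike.mem_coe, Subgroup.mem_centralizer_iff] <;>
        rintro y (rfl : y = _)
      · exact ((Commute.refl x).pow_left 20).eq
      · have h1 : x * α ^ 20 = α ^ (13 * 20) * x := hswap 20
        have h2 : α ^ (13 * 20) = α ^ 20 := by
          calc α ^ (13 * 20) = α ^ 20 * (α ^ 40) ^ 6 := by rw [← pow_mul, ← pow_add]
          _ = α ^ 20 := by rw [hα, one_pow, mul_one]
        rw [h2] at h1
        exact h1.symm
    rw [hgen] at hle
    exact (Subgroup.mem_centralizer_iff.mp (hle (Subgroup.mem_top g)) _ rfl).symm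
  -- α^20 ≠ 1
  have h20ne : α ^ 20 ≠ 1 := by
    intro h20
    have hswapj : ∀ j k : ℕ, β ^ j * α ^ k = α ^ (13 ^ j * k) * β ^ j := by
      intro j
      induction j with
      | zero => intro k; simp
      | succ j ih =>
        intro k
        calc β ^ (j + 1) * α ^ k = β ^ j * (β * α ^ k) := by rw [pow_succ]; group
          _ = β ^ j * α ^ (13 * k) * β := by rw [hswap]; group
          _ = α ^ (13 ^ j * (13 * k)) * β ^ j * β := by rw [ih]
          _ = α ^ (13 ^ (j + 1) * k) * β ^ (j + 1) := by
              rw [mul_assoc, ← pow_succ]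
              congr 2
              ring
    let M : Submonoid G :=
      { carrier := {g | ∃ i j : ℕ, g = α ^ i * β ^ j}
        one_mem' := ⟨0, 0, by simp⟩
        mul_mem' := by
          rintro x y ⟨i, j, rfl⟩ ⟨k, l, rfl⟩
          refine ⟨i + 13 ^ j * k, j + l, ?_⟩
          rw [pow_add, pow_add, mul_assoc (α ^ i), ← mul_assoc (β ^ j), hswapj]
          group }
    have key : ∀ g : G, ∃ i j : ℕ, g = α ^ i * β ^ j := by
      intro g
      have hg : g ∈ (Subgroup.closure {α, β}).toSubmonoid := by
        rw [hgen]; trivial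
      rw [Subgroup.closure_toSubmonoid] at hg
      have hle : Submonoid.closure ({α, β} ∪ ({α, β} : Set G)⁻¹) ≤ M := by
        rw [Submonoid.closure_le]
        rintro x (h | h)
        · rcases h with rfl | rfl
          · exact ⟨1, 0, by simp⟩
          · exact ⟨0, 1, by simp⟩
        · rw [Set.mem_inv] at h
          rcases h with h | h
          · refine ⟨39, 0, ?_⟩
            have : α * α ^ 39 = 1 := by rw [← pow_succ']; exact hα
            rw [pow_zero, mul_one, ← inv_eq_of_mul_eq_one_right this, ← h, inv_inv]
          · refine ⟨0, 3, ?_⟩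
            have : β * β ^ 3 = 1 := by rw [← pow_succ']; exact hβ
            rw [pow_zero, one_mul, ← inv_eq_of_mul_eq_one_right this, ← h, inv_inv]
      exact hle hg
    have hsurj : Function.Surjective (fun p : Fin 20 × Fin 4 => α ^ (p.1 : ℕ) * β ^ (p.2 : ℕ)) := by
      intro g
      obtain ⟨i, j, rfl⟩ := key g
      refine ⟨(⟨i % 20, Nat.mod_lt _ (by norm_num)⟩, ⟨j % 4, Nat.mod_lt _ (by norm_num)⟩), ?_⟩
      simp only
      rw [← pow_eq_pow_mod i h20, ← pow_eq_pow_mod j hβ]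
    have hle' : Nat.card G ≤ Nat.card (Fin 20 × Fin 4) :=
      Nat.card_le_card_of_surjective _ hsurj
    simp [hcard] at hle'
  -- zpowers (α^20) is normal
  have hNnormal : (Subgroup.zpowers (α ^ 20)).Normal := by
    constructor
    intro n hn g
    obtain ⟨k, rfl⟩ := Subgroup.mem_zpowers_iff.mp hn
    have : Commute g ((α ^ 20) ^ k) := (central g).zpow_right k
    rw [this.eq, mul_assoc, mul_inv_cancel, mul_one]
    exact hn
  -- α^10 ∈ G₁
  have hα10 : α ^ 10 ∈ G₁ := by
    have := Subgroup.sq_mem_of_index_two hidx (α ^ 5)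
    rwa [← pow_mul] at this
  have hmem : α ^ 10 ∈ ((Subgroup.zpowers (α ^ 20) ⊔ H : Subgroup G) : Set G) := by
    rw [hsup]; exact hα10
  rw [Subgroup.normal_mul] at hmem
  obtain ⟨a, ha, h, hh, hmul⟩ := hmem
  obtain ⟨k, rfl⟩ := Subgroup.mem_zpowers_iff.mp ha
  set a := (α ^ 20) ^ k with ha_def
  have hmul' : a * h = α ^ 10 := hmul
  have hcomm : Commute a h := ((central h).zpow_right k).symm
  have ha2 : a * a = 1 := by
    rw [ha_def, ← zpow_add, show k + k = 2 * k by ring, zpow_mul]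
    have : (α ^ 20) ^ (2 : ℤ) = 1 := by
      rw [show ((2:ℤ) = ((2:ℕ):ℤ)) by norm_num, zpow_natCast, ← pow_mul]
      exact hα
    rw [this, one_zpow]
  have h20H : α ^ 20 ∈ H := by
    have hsq : α ^ 20 = h * h := by
      have e1 : (a * h) * (a * h) = α ^ 20 := by rw [hmul', ← pow_add]
      calc α ^ 20 = (a * h) * (a * h) := e1.symm
        _ = a * (h * a) * h := by group
        _ = a * (a * h) * h := by rw [hcomm.symm.eq]
        _ = (a * a) * (h * h) := by group
        _ = h * h := by rw [ha2, one_mul]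
    rw [hsq]
    exact H.mul_mem hh hh
  have : α ^ 20 ∈ H ⊓ Subgroup.zpowers (α ^ 20) :=
    ⟨h20H, Subgroup.mem_zpowers _⟩
  rw [hHinf] at this
  exact h20ne (Subgroup.mem_bot.mp this)
end

section
/- The subgroup ⟨α⁸, β²⟩ of G generated by α⁸ and β² is a normal subgroup of G of order 10 (isomorphic to the dihedral group of order 10), and the quotient group G/⟨α⁸, β²⟩ has order 16. -/
namespace Aux12

variable {G : Type*} [Group G]

theorem pow_mod5 {a : G} (ha5 : a ^ 5 = 1) (m n : ℕ) (h : m % 5 = n % 5) :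
    a ^ m = a ^ n := by
  rw [← Nat.div_add_mod m 5, ← Nat.div_add_mod n 5, h, pow_add, pow_add,
    pow_mul, pow_mul, ha5, one_pow]
  simp

theorem swap_pow {a b : G} (ha5 : a ^ 5 = 1) (hbab : b * a * b⁻¹ = a⁻¹) (m : ℕ) :
    a ^ m * b = b * a ^ (4 * m) := by
  have hainv : a⁻¹ = a ^ 4 := by
    refine inv_eq_of_mul_eq_one_left ?_
    rw [← pow_succ]
    exact ha5
  have h1 : b * a ^ (4 * m) * b⁻¹ = a ^ (16 * m) := by
    rw [← conj_pow, hbab, hainv, ← pow_mul]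
    ring_nf
  have h2 : b * a ^ (4 * m) * b⁻¹ = a ^ m := by
    rw [h1]
    exact pow_mod5 ha5 _ _ (by omega)
  rw [← h2]
  group

/-- the homomorphism from the dihedral group of order 10. -/
def dhom (a b : G) (ha5 : a ^ 5 = 1) (hb2 : b ^ 2 = 1) (hbab : b * a * b⁻¹ = a⁻¹) :
    DihedralGroup 5 →* G where
  toFun := fun x => match x with
    | .r i => a ^ i.val
    | .sr i => b * a ^ i.val
  map_one' := by
    show a ^ (0 : ZMod 5).val = 1
    simp
  map_mul' := by
    have hz1 : ∀ i j : ZMod 5, (i + j).val % 5 = (i.val + j.val) % 5 := by decide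
    have hz2 : ∀ i j : ZMod 5, (j - i).val % 5 = (4 * i.val + j.val) % 5 := by decide
    rintro (i | i) (j | j)
    · show a ^ (i + j).val = a ^ i.val * a ^ j.val
      rw [← pow_add]
      exact pow_mod5 ha5 _ _ (hz1 i j)
    · show b * a ^ (j - i).val = a ^ i.val * (b * a ^ j.val)
      rw [← mul_assoc, swap_pow ha5 hbab, mul_assoc, ← pow_add]
      exact congrArg _ (pow_mod5 ha5 _ _ (hz2 i j))
    · show b * a ^ (i + j).val = b * a ^ i.val * a ^ j.val
      rw [mul_assoc, ← pow_add]
      exact congrArg _ (pow_mod5 ha5 _ _ (hz1 i j))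
    · show a ^ (j - i).val = b * a ^ i.val * (b * a ^ j.val)
      have : b * a ^ i.val * (b * a ^ j.val) = b * (a ^ i.val * b) * a ^ j.val := by group
      rw [this, swap_pow ha5 hbab, ← mul_assoc b b, ← pow_two, hb2, one_mul, ← pow_add]
      exact pow_mod5 ha5 _ _ (hz2 i j)

@[simp] theorem dhom_r (a b : G) (ha5 : a ^ 5 = 1) (hb2 : b ^ 2 = 1)
    (hbab : b * a * b⁻¹ = a⁻¹) (i : ZMod 5) :
    dhom a b ha5 hb2 hbab (.r i) = a ^ i.val := rfl

@[simp] theorem dhom_sr (a b : G) (ha5 : a ^ 5 = 1) (hb2 : b ^ 2 = 1)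
    (hbab : b * a * b⁻¹ = a⁻¹) (i : ZMod 5) :
    dhom a b ha5 hb2 hbab (.sr i) = b * a ^ i.val := rfl

end Aux12

/-- In the group `G = ⟨α, β ∣ α⁴⁰ = β⁴ = 1, βαβ⁻¹ = α¹³⟩` of order 160,
the subgroup `⟨α⁸, β²⟩` generated by `α⁸` and `β²` is a normal subgroup of order 10,
isomorphic to the dihedral group of order 10, and the quotient `G/⟨α⁸, β²⟩` has order 16. -/
theorem closure_alpha_eight_beta_sq_normal_dihedral
    (G : Type*) [Group G] (α β : G)
    (hgen : Subgroup.closure {α, β} = ⊤)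
    (hα : α ^ 40 = 1) (hβ : β ^ 4 = 1)
    (hrel : β * α * β⁻¹ = α ^ 13)
    (hcard : Nat.card G = 160) :
    (Subgroup.closure {α ^ 8, β ^ 2}).Normal ∧
      Nat.card (Subgroup.closure {α ^ 8, β ^ 2}) = 10 ∧
      Nonempty ((Subgroup.closure {α ^ 8, β ^ 2}) ≃* DihedralGroup 5) ∧
      Nat.card (G ⧸ Subgroup.closure {α ^ 8, β ^ 2}) = 16 := by
  haveI : Finite G := Nat.finite_of_card_ne_zero (by rw [hcard]; norm_num)
  haveI : Fact (Nat.Prime 5) := ⟨by norm_num⟩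
  have hpα : ∀ m n : ℕ, m % 40 = n % 40 → α ^ m = α ^ n := by
    intro m n h
    rw [← Nat.div_add_mod m 40, ← Nat.div_add_mod n 40, h, pow_add, pow_add,
      pow_mul, pow_mul, hα, one_pow]
    simp
  -- the cyclic normal subgroup N = ⟨α⟩
  set N := Subgroup.zpowers α with hNdef
  have hNnorm : N.Normal := by
    refine Subgroup.normalizer_eq_top_iff.mp (top_le_iff.mp ?_)
    rw [← hgen, Subgroup.closure_le]
    rintro x hx
    rcases hx with hx | hx <;> rw [hx]
    · exact Subgroup.le_normalizer (Subgroup.mem_zpowers α)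
    · refine Subgroup.mem_normalizer_fintype ?_
      rintro n hn
      obtain ⟨k, rfl⟩ := hn
      refine ⟨13 * k, ?_⟩
      have h13 : (α ^ (13 : ℕ)) ^ k = α ^ ((13 : ℤ) * k) := by
        rw [← zpow_natCast α 13, ← zpow_mul]
        norm_num
      show α ^ ((13 : ℤ) * k) = β * α ^ k * β⁻¹
      rw [← conj_zpow, hrel, h13]
  -- the quotient by N is generated by the image of β
  set π := QuotientGroup.mk' N with hπdef
  have hπα : π α = 1 := (QuotientGroup.eq_one_iff α).mpr (Subgroup.mem_zpowers α)
  have hπgen : Subgroup.zpowers (π β) = ⊤ := by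
    rw [eq_top_iff]
    have hmap : Subgroup.map π (Subgroup.closure {α, β}) = ⊤ := by
      rw [hgen]
      exact Subgroup.map_top_of_surjective π (QuotientGroup.mk'_surjective N)
    rw [MonoidHom.map_closure] at hmap
    rw [← hmap, Subgroup.closure_le]
    rintro x ⟨y, hy, rfl⟩
    rcases hy with hy | hy <;> rw [hy]
    · rw [hπα]; exact Subgroup.one_mem _
    · exact Subgroup.mem_zpowers _
  have hcardQ : Nat.card (G ⧸ N) = orderOf (π β) := by
    rw [← Nat.card_zpowers, hπgen, Subgroup.card_top]
  -- counting forces |N| = 40 and |G/N| = 4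
  have hdvdQ : Nat.card (G ⧸ N) ∣ 4 := by
    rw [hcardQ]
    exact orderOf_dvd_of_pow_eq_one (by rw [← map_pow, hβ, map_one])
  have hdvdN : Nat.card N ∣ 40 := by
    rw [hNdef, Nat.card_zpowers]
    exact orderOf_dvd_of_pow_eq_one hα
  have hprod : Nat.card G = Nat.card (G ⧸ N) * Nat.card N :=
    Subgroup.card_eq_card_quotient_mul_card_subgroup N
  have hleQ : Nat.card (G ⧸ N) ≤ 4 := Nat.le_of_dvd (by norm_num) hdvdQ
  have hleN : Nat.card N ≤ 40 := Nat.le_of_dvd (by norm_num) hdvdN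
  have hNcard : Nat.card N = 40 := by nlinarith [hprod, hcard]
  have hQcard : Nat.card (G ⧸ N) = 4 := by
    rw [hcard, hNcard] at hprod; omega
  have hordα : orderOf α = 40 := by rw [← Nat.card_zpowers]; exact hNcard
  have hordπβ : orderOf (π β) = 4 := by rw [← hcardQ]; exact hQcard
  have hbN : β ^ 2 ∉ N := by
    intro h
    have h1 : (π β) ^ 2 = 1 := by
      rw [← map_pow]
      exact (QuotientGroup.eq_one_iff _).mpr h
    have := orderOf_dvd_of_pow_eq_one h1
    rw [hordπβ] at this
    omega
  -- the elements a = α⁸ and b = β²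
  have ha5 : (α ^ 8) ^ 5 = 1 := by rw [← pow_mul]; exact hα
  have hane : (α ^ 8) ≠ 1 := by
    intro h
    have := orderOf_dvd_of_pow_eq_one h
    rw [hordα] at this
    omega
  have horda : orderOf (α ^ 8) = 5 := orderOf_eq_prime ha5 hane
  have hb2 : (β ^ 2) ^ 2 = 1 := by rw [← pow_mul]; exact hβ
  have h9 : β ^ 2 * α * (β ^ 2)⁻¹ = α ^ 9 := by
    have h1 : β ^ 2 * α * (β ^ 2)⁻¹ = β * (β * α * β⁻¹) * β⁻¹ := by
      rw [sq]; group
    rw [h1, hrel, ← conj_pow, hrel, ← pow_mul]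
    exact hpα 169 9 rfl
  have hbab : β ^ 2 * α ^ 8 * (β ^ 2)⁻¹ = (α ^ 8)⁻¹ := by
    rw [← conj_pow, h9, ← pow_mul]
    refine eq_inv_of_mul_eq_one_left ?_
    rw [← pow_add]
    exact (hpα 80 0 rfl).trans (pow_zero α)
  set a := α ^ 8 with ha_def
  set b := β ^ 2 with hb_def
  set H := Subgroup.closure {a, b} with hHdef
  set f := Aux12.dhom a b ha5 hb2 hbab with hf_def
  have hinj : Function.Injective f := by
    rw [injective_iff_map_eq_one]
    rintro (i | i) h
    · rw [Aux12.dhom_r] at h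
      have h5 := orderOf_dvd_of_pow_eq_one h
      rw [horda] at h5
      have hlt : i.val < 5 := ZMod.val_lt i
      have : i.val = 0 := by omega
      have hi0 : i = 0 := by rwa [ZMod.val_eq_zero] at this
      rw [hi0]
      rfl
    · exfalso
      apply hbN
      rw [Aux12.dhom_sr] at h
      have hb' : b = (a ^ i.val)⁻¹ := eq_inv_of_mul_eq_one_left h
      rw [hb_def] at hb' ⊢
      rw [hb']
      exact inv_mem (pow_mem (pow_mem (Subgroup.mem_zpowers α) 8) i.val)
  have hrange : f.range = H := by
    apply le_antisymm
    · rintro x ⟨y, rfl⟩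
      rcases y with i | i
      · rw [Aux12.dhom_r]
        exact pow_mem (Subgroup.subset_closure (by simp)) _
      · rw [Aux12.dhom_sr]
        exact mul_mem (Subgroup.subset_closure (by simp)) (pow_mem (Subgroup.subset_closure (by simp)) _)
    · rw [hHdef, Subgroup.closure_le]
      rintro x hx
      rcases hx with hx | hx <;> rw [hx]
      · exact ⟨.r 1, by rw [Aux12.dhom_r, show ((1 : ZMod 5).val) = 1 from rfl, pow_one]⟩
      · exact ⟨.sr 0, by rw [Aux12.dhom_sr, show ((0 : ZMod 5).val) = 0 from rfl, pow_zero, mul_one]⟩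
  have e : H ≃* DihedralGroup 5 :=
    (MulEquiv.subgroupCongr hrange).symm.trans (MonoidHom.ofInjective hinj).symm
  have hHcard : Nat.card H = 10 := by
    rw [Nat.card_congr e.toEquiv, Nat.card_eq_fintype_card, DihedralGroup.card]
  -- normality of H
  have hconj : ∀ g : G, g * a * g⁻¹ ∈ H → g * b * g⁻¹ ∈ H → ∀ n ∈ H, g * n * g⁻¹ ∈ H := by
    intro g h1 h2 n hn
    have hle : Subgroup.closure {a, b} ≤ H.comap ((MulAut.conj g).toMonoidHom) := by
      rw [Subgroup.closure_le]
      rintro x hx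
      rcases hx with hx | hx <;> rw [hx]
      · exact h1
      · exact h2
    exact hle hn
  have hαa : α * a * α⁻¹ ∈ H := by
    have : α * a * α⁻¹ = a := by rw [ha_def]; group
    rw [this]
    exact Subgroup.subset_closure (by simp)
  have hαb : α * b * α⁻¹ ∈ H := by
    have hc : b * α = α ^ 9 * b := by rw [← h9]; group
    have h89 : α ^ 9 = α ^ 8 * α := by rw [← pow_succ]
    have h2 : α * b * α⁻¹ = a⁻¹ * b := by
      rw [mul_inv_eq_iff_eq_mul, mul_assoc, hc, ha_def, h89, mul_assoc (α ^ 8) α,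
        inv_mul_cancel_left]
    rw [h2]
    exact mul_mem (inv_mem (Subgroup.subset_closure (by simp))) (Subgroup.subset_closure (by simp))
  have hβa : β * a * β⁻¹ ∈ H := by
    have h1 : β * a * β⁻¹ = a ^ 3 := by
      rw [ha_def, ← conj_pow, hrel, ← pow_mul, ← pow_mul]
      exact hpα 104 24 rfl
    rw [h1]
    exact pow_mem (Subgroup.subset_closure (by simp)) 3
  have hβb : β * b * β⁻¹ ∈ H := by
    have h1 : β * b * β⁻¹ = b := by rw [hb_def]; group
    rw [h1]
    exact Subgroup.subset_closure (by simp)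
  have hHnormal : H.Normal := by
    refine Subgroup.normalizer_eq_top_iff.mp (top_le_iff.mp ?_)
    rw [← hgen, Subgroup.closure_le]
    rintro x hx
    rcases hx with hx | hx <;> rw [hx]
    · exact Subgroup.mem_normalizer_fintype (fun n hn => hconj α hαa hαb n hn)
    · exact Subgroup.mem_normalizer_fintype (fun n hn => hconj β hβa hβb n hn)
  have hquot : Nat.card (G ⧸ H) = 16 := by
    have := Subgroup.card_eq_card_quotient_mul_card_subgroup H
    rw [hcard, hHcard] at this
    omega
  exact ⟨hHnormal, hHcard, ⟨e⟩, hquot⟩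
end

section
/- No subgroup of order 16 of PGL₂(ℂ) leaves invariant a subset of the complex projective line ℙ¹(ℂ) of cardinality 3 or 4; that is, if Γ ≤ PGL₂(ℂ) has order 16 and S ⊂ ℙ¹(ℂ) satisfies g·S = S for all g ∈ Γ, then |S| ∉ {3, 4}. -/
/-- `PGL₂(ℂ)`: the quotient of `GL₂(ℂ)` by its center (the nonzero scalar matrices). -/
abbrev PGL2C : Type _ := GL (Fin 2) ℂ ⧸ Subgroup.center (GL (Fin 2) ℂ)

/-- The Möbius action of (a representative in `GL₂(ℂ)` of an element of `PGL₂(ℂ)`) on the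
complex projective line `ℙ¹(ℂ) = ℙ(ℂ²)`; two representatives of the same element of
`PGL₂(ℂ)` induce the same map. -/
noncomputable def mobius (g : GL (Fin 2) ℂ) :
    Projectivization ℂ (Fin 2 → ℂ) → Projectivization ℂ (Fin 2 → ℂ) :=
  Projectivization.map
    (LinearMap.GeneralLinearGroup.toLinearEquiv (Matrix.GeneralLinearGroup.toLin g)).toLinearMap
    (LinearMap.GeneralLinearGroup.toLinearEquiv (Matrix.GeneralLinearGroup.toLin g)).injective

/-!
A nontrivial element of `PGL₂` fixes at most two points of `ℙ¹`: a linear map of a plane with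
three pairwise independent eigenvectors is a scalar. Hence a subgroup `Γ` stabilising a set `S`
with at least three points acts faithfully on `S`, so `|Γ|` divides `|S|!`. But `16` divides
neither `3! = 6` nor `4! = 24`.
-/

open Module Projectivization MulAction
open scoped LinearAlgebra.Projectivization MatrixGroups Nat Pointwise

section Plane

variable {K V : Type*} [Field K] [AddCommGroup V] [Module K V]

theorem Module.End.eq_smul_one_of_linearIndependent_eigenvectors (hV : finrank K V = 2)
    {f : End K V} {μ : K} {u v : V} (huv : LinearIndependent K ![u, v])
    (hu : f u = μ • u) (hv : f v = μ • v) : f = μ • 1 := by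
  let b := basisOfLinearIndependentOfCardEqFinrank huv (by simp [hV])
  refine b.ext fun i => ?_
  fin_cases i <;> simp [b, hu, hv]

theorem Module.End.exists_eq_smul_one_of_three_eigenlines (hV : finrank K V = 2)
    {f : End K V} {x y z : ℙ K V} {a b c : K} (hxy : x ≠ y) (hxz : x ≠ z) (hyz : y ≠ z)
    (hx : f x.rep = a • x.rep) (hy : f y.rep = b • y.rep) (hz : f z.rep = c • z.rep) :
    ∃ μ : K, f = μ • 1 := by
  by_cases hab : a = b
  · subst hab
    exact ⟨a, eq_smul_one_of_linearIndependent_eigenvectors hV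
      (linearIndependent_pair_iff_ne.2 hxy) hx hy⟩
  by_cases hac : a = c
  · subst hac
    exact ⟨a, eq_smul_one_of_linearIndependent_eigenvectors hV
      (linearIndependent_pair_iff_ne.2 hxz) hx hz⟩
  by_cases hbc : b = c
  · subst hbc
    exact ⟨b, eq_smul_one_of_linearIndependent_eigenvectors hV
      (linearIndependent_pair_iff_ne.2 hyz) hy hz⟩
  -- Eigenvectors for three distinct eigenvalues would be independent in a plane.
  have hinj : Function.Injective ![a, b, c] := by
    intro i j
    fin_cases i <;> fin_cases j <;>
      simp [hab, hac, hbc, Ne.symm hab, Ne.symm hac, Ne.symm hbc]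
  have hli := f.eigenvectors_linearIndependent' ![a, b, c] hinj ![x.rep, y.rep, z.rep]
    fun i => by fin_cases i <;> simp [hasEigenvector_iff, hx, hy, hz, rep_nonzero]
  have : Module.Finite K V := Module.finite_of_finrank_pos (by omega)
  have := hli.fintype_card_le_finrank
  simp [hV] at this

theorem Projectivization.smul_eq_self_iff {G : Type*} [Group G] [DistribMulAction G V]
    [SMulCommClass G K V] {g : G} {x : ℙ K V} :
    g • x = x ↔ ∃ a : K, g • x.rep = a • x.rep := by
  conv_lhs => rw [← mk_rep x, smul_mk, mk_eq_mk_iff']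
  exact exists_congr fun _ => eq_comm

variable {ι : Type*} [Fintype ι] [DecidableEq ι]

theorem Matrix.GeneralLinearGroup.mem_center_of_three_fixed_points (hι : Fintype.card ι = 2)
    {g : GL ι K} {x y z : ℙ K (ι → K)} (hxy : x ≠ y) (hxz : x ≠ z) (hyz : y ≠ z)
    (hx : g • x = x) (hy : g • y = y) (hz : g • z = z) : g ∈ Subgroup.center (GL ι K) := by
  obtain ⟨a, hx⟩ := smul_eq_self_iff.1 hx
  obtain ⟨b, hy⟩ := smul_eq_self_iff.1 hy
  obtain ⟨c, hz⟩ := smul_eq_self_iff.1 hz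
  obtain ⟨μ, hμ⟩ := End.exists_eq_smul_one_of_three_eigenlines (f := Matrix.toLin' g.val)
    (by simp [hι]) hxy hxz hyz hx hy hz
  rw [mem_center_iff_val_mem_range_scalar]
  refine ⟨μ, Matrix.toLin'.injective ?_⟩
  rw [hμ]
  ext v i
  simp [Pi.single_apply]

theorem Matrix.ProjGenLinGroup.eq_one_of_forall_smul_eq_self (hι : Fintype.card ι = 2)
    {s : Set (ℙ K (ι → K))} (hs : 2 < s.ncard) {g : PGL(ι, K)} (hg : ∀ x ∈ s, g • x = x) :
    g = 1 := by
  obtain ⟨g, rfl⟩ := mk_surjective g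
  obtain ⟨x, hx, y, hy, z, hz, hxy, hxz, hyz⟩ :=
    (Set.two_lt_ncard (Set.finite_of_ncard_pos (by omega))).1 hs
  exact mk_eq_one.2 <| GeneralLinearGroup.mem_center_of_three_fixed_points hι hxy hxz hyz
    (hg x hx) (hg y hy) (hg z hz)

end Plane

theorem MulAction.card_dvd_factorial_ncard_of_le_stabilizer {G α : Type*} [Group G]
    [MulAction G α] {H : Subgroup G} {s : Set α} (hs : s.Finite) (hH : H ≤ stabilizer G s)
    (hfix : ∀ g ∈ H, (∀ a ∈ s, g • a = a) → g = 1) : Nat.card H ∣ s.ncard ! := by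
  have : Finite s := hs
  let ρ := (toPermHom (stabilizer G s) s).comp (Subgroup.inclusion hH)
  have hρ : Function.Injective ρ := by
    rw [injective_iff_map_eq_one]
    intro g hg
    exact Subtype.ext <| hfix g g.2 fun a ha => congrArg Subtype.val (Equiv.ext_iff.1 hg ⟨a, ha⟩)
  rw [← Nat.card_coe_set_eq, ← Nat.card_perm]
  exact Subgroup.card_dvd_of_injective ρ hρ

noncomputable instance : MulAction PGL2C (ℙ ℂ (Fin 2 → ℂ)) :=
  inferInstanceAs (MulAction PGL(2, ℂ) _)

theorem mobius_eq_smul (g : GL (Fin 2) ℂ) : mobius g = ((QuotientGroup.mk g : PGL2C) • ·) := by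
  funext x
  induction x using Projectivization.ind with | _ v hv => rfl

/-- No subgroup of order 16 of `PGL₂(ℂ)` leaves invariant a subset of
the complex projective line `ℙ¹(ℂ)` of cardinality 3 or 4: if `Γ ≤ PGL₂(ℂ)` has order 16
and `S ⊆ ℙ¹(ℂ)` satisfies `g • S = S` for all `g ∈ Γ`, then `|S| ∉ {3, 4}`. -/
theorem pgl2_order_sixteen_no_invariant_three_or_four_set
    (Γ : Subgroup PGL2C) (hΓ : Nat.card Γ = 16)
    (S : Set (Projectivization ℂ (Fin 2 → ℂ)))
    (hinv : ∀ g : GL (Fin 2) ℂ, (QuotientGroup.mk g : PGL2C) ∈ Γ → mobius g '' S = S) :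
    S.ncard ≠ 3 ∧ S.ncard ≠ 4 := by
  have hle : Γ ≤ stabilizer PGL2C S := by
    intro γ hγ
    obtain ⟨g, rfl⟩ := QuotientGroup.mk_surjective γ
    rw [mem_stabilizer_iff, ← Set.image_smul, ← mobius_eq_smul, hinv g hγ]
  have hdvd : 2 < S.ncard → 16 ∣ S.ncard ! := fun hS =>
    hΓ ▸ card_dvd_factorial_ncard_of_le_stabilizer (Set.finite_of_ncard_pos (by omega)) hle
      fun _ _ hγ => Matrix.ProjGenLinGroup.eq_one_of_forall_smul_eq_self (by simp) hS hγ
  constructor <;> intro hS <;> simpa [hS, Nat.factorial] using hdvd (by omega)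
end

section
/- The quartic form f(x₁,x₂,x₃,x₄) = x₁³x₂ + x₂³x₃ + x₃³x₄ + x₄³x₁ over ℂ has no singular point other than the origin: if (x₁,x₂,x₃,x₄) ∈ ℂ⁴ satisfies all four equations 3x₁²x₂ + x₄³ = 0, x₁³ + 3x₂²x₃ = 0, x₂³ + 3x₃²x₄ = 0, x₃³ + 3x₄²x₁ = 0 (the vanishing of all partial derivatives of f), then x₁ = x₂ = x₃ = x₄ = 0. In particular the quartic surface {f = 0} ⊂ ℙ³ is smooth. -/
/-- The quartic form `f = x₁³x₂ + x₂³x₃ + x₃³x₄ + x₄³x₁` over `ℂ` has no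
singular point other than the origin: if `(x₁,x₂,x₃,x₄) ∈ ℂ⁴` satisfies the vanishing of
all four partial derivatives `3x₁²x₂ + x₄³ = x₁³ + 3x₂²x₃ = x₂³ + 3x₃²x₄ = x₃³ + 3x₄²x₁ = 0`,
then `x₁ = x₂ = x₃ = x₄ = 0`.  (In particular the quartic surface `{f = 0} ⊂ ℙ³` is smooth.) -/
theorem quartic_branch_surface_smooth
    (x₁ x₂ x₃ x₄ : ℂ)
    (h₁ : 3 * x₁ ^ 2 * x₂ + x₄ ^ 3 = 0)
    (h₂ : x₁ ^ 3 + 3 * x₂ ^ 2 * x₃ = 0)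
    (h₃ : x₂ ^ 3 + 3 * x₃ ^ 2 * x₄ = 0)
    (h₄ : x₃ ^ 3 + 3 * x₄ ^ 2 * x₁ = 0) :
    x₁ = 0 ∧ x₂ = 0 ∧ x₃ = 0 ∧ x₄ = 0 := by
  have key : (80 : ℂ) * (x₁ * x₂ * x₃ * x₄) ^ 3 = 0 := by
    linear_combination (-(x₂^3*x₃^3*x₄^3)) * h₂ + (3*x₂^2*x₃*x₃^3*x₄^3) * h₃ +
      (-(9*x₂^2*x₃^3*x₄*x₄^3)) * h₄ + (27*x₂^2*x₃^3*x₄^3*x₁) * h₁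
  have hP : x₁ * x₂ * x₃ * x₄ = 0 := by
    have := mul_eq_zero.mp key
    rcases this with h | h
    · norm_num at h
    · exact pow_eq_zero_iff (by norm_num) |>.mp h
  have cube : ∀ z : ℂ, z ^ 3 = 0 → z = 0 := fun z hz =>
    pow_eq_zero_iff (by norm_num) |>.mp hz
  rcases mul_eq_zero.mp hP with hP' | h4
  · rcases mul_eq_zero.mp hP' with hP'' | h3
    · rcases mul_eq_zero.mp hP'' with h1 | h2
      · -- x₁ = 0
        have e4 : x₄ = 0 := cube _ (by rw [h1] at h₁; linear_combination h₁)
        have e3 : x₃ = 0 := cube _ (by rw [e4] at h₄; linear_combination h₄)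
        have e2 : x₂ = 0 := cube _ (by rw [e3] at h₃; linear_combination h₃)
        exact ⟨h1, e2, e3, e4⟩
      · -- x₂ = 0
        have e1 : x₁ = 0 := cube _ (by rw [h2] at h₂; linear_combination h₂)
        have e4 : x₄ = 0 := cube _ (by rw [e1] at h₁; linear_combination h₁)
        have e3 : x₃ = 0 := cube _ (by rw [e4] at h₄; linear_combination h₄)
        exact ⟨e1, h2, e3, e4⟩
    · -- x₃ = 0
      have e2 : x₂ = 0 := cube _ (by rw [h3] at h₃; linear_combination h₃)
      have e1 : x₁ = 0 := cube _ (by rw [e2] at h₂; linear_combination h₂)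
      have e4 : x₄ = 0 := cube _ (by rw [e1] at h₁; linear_combination h₁)
      exact ⟨e1, e2, h3, e4⟩
  · -- x₄ = 0
    have e3 : x₃ = 0 := cube _ (by rw [h4] at h₄; linear_combination h₄)
    have e2 : x₂ = 0 := cube _ (by rw [e3] at h₃; linear_combination h₃)
    have e1 : x₁ = 0 := cube _ (by rw [e2] at h₂; linear_combination h₂)
    exact ⟨e1, e2, e3, h4⟩
end
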